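/- Let (𝒜_i)_{i∈I} be subalgebras of a non-commutative probability space (𝒜, φ) that are BMT independent with respect to a digraph G = (I, E). Let {I_j : j ∈ J} be a partition of I into non-empty pairwise disjoint subsets and let ℬ_j be the subalgebra generated by the 𝒜_i with i ∈ I_j. If J carries a total order < such that (i, i') ∈ E and (i', i) ∉ E whenever i ∈ I_j and i' ∈ I_{j'} with j' < j, then the family (ℬ_j)_{j∈J} is monotone independent with respect to this order. -/

import Mathlib

open scoped Classical
open Filter

noncomputable section

/-- The relation defining the kernel of `f` restricted to the index set `S`,
subordinated to the digraph with edge relation `E`: `k ∼ k'` iff `f k = f k'` and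
every `l ∈ S` strictly between `k` and `k'` with `f l ≠ f k` satisfies `(f l, f k) ∈ E`. -/
def kerGRelOn {m : ℕ} {V : Type*} (E : V → V → Prop) (f : Fin m → V)
    (S : Finset (Fin m)) (k k' : Fin m) : Prop :=
  f k = f k' ∧ ∀ l ∈ S, min k k' < l → l < max k k' → f l ≠ f k → E (f l) (f k)

/-- The blocks of the kernel of `f|_S` subordinated to the digraph `E`. -/
def kerGBlocks {m : ℕ} {V : Type*} (E : V → V → Prop) (f : Fin m → V)
    (S : Finset (Fin m)) : Finset (Finset (Fin m)) :=
  S.image fun k => S.filter fun k' => kerGRelOn E f S k k'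

/-- The blocks of the plain kernel `ker[f]` of `f : [m] → V`. -/
def kerBlocks {m : ℕ} {V : Type*} (f : Fin m → V) : Finset (Finset (Fin m)) :=
  Finset.univ.image fun k => Finset.univ.filter fun k' => f k = f k'

/-- The product of `a k` for `k ∈ B`, taken in increasing order of `k`. -/
def blockProd {A : Type*} [Monoid A] {m : ℕ} (a : Fin m → A) (B : Finset (Fin m)) : A :=
  ((B.sort (· ≤ ·)).map a).prod

/-- The edge set of the nesting-crossing graph of the partition `π`, relabeled along `f`:
the pair `(f-label of B, f-label of C)` is an edge whenever `B ≠ C` are blocks of `π` and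
some `l ∈ B` lies strictly between two elements (equivalently, between min and max) of `C`. -/
def nestCrossEdges {m : ℕ} {V : Type*} (π : Finset (Finset (Fin m))) (f : Fin m → V) :
    Set (V × V) :=
  { p | ∃ B ∈ π, ∃ C ∈ π, B ≠ C ∧
      (∃ l ∈ B, ∃ c₁ ∈ C, ∃ c₂ ∈ C, c₁ < l ∧ l < c₂) ∧
      (∃ k ∈ B, f k = p.1) ∧ (∃ k' ∈ C, f k' = p.2) }

/-- A family of (non-unital) subalgebras of a non-commutative probability space `(𝒜, φ)`
is BMT independent with respect to the digraph `E` on the index set `I`. -/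
def BMTIndep {𝒜 : Type*} [Ring 𝒜] [Algebra ℂ 𝒜] (φ : 𝒜 →ₗ[ℂ] ℂ)
    {I : Type*} (E : I → I → Prop) (A : I → NonUnitalSubalgebra ℂ 𝒜) : Prop :=
  ∀ (m : ℕ), 1 ≤ m → ∀ (idx : Fin m → I) (a : Fin m → 𝒜),
    (∀ k, a k ∈ A (idx k)) →
    φ (List.ofFn a).prod = ∏ B ∈ kerGBlocks E idx Finset.univ, φ (blockProd a B)

/-- Random variables `a 0, …, a (N-1)` are BMT independent with respect to the digraph `E`. -/
def BMTIndepVars {𝒜 : Type*} [Ring 𝒜] [Algebra ℂ 𝒜] (φ : 𝒜 →ₗ[ℂ] ℂ)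
    {N : ℕ} (E : Fin N → Fin N → Prop) (a : Fin N → 𝒜) : Prop :=
  ∀ (m : ℕ) (idx : Fin m → Fin N),
    φ (List.ofFn fun k => a (idx k)).prod
      = ∏ B ∈ kerGBlocks E idx Finset.univ, φ (blockProd (fun k => a (idx k)) B)

/-!
Every element of `ℬ j` is a linear combination of words (non-empty products) in the letters of
the `𝒜 i`, `i ∈ I j`, and both sides of (M.1) and of (M.2) are multilinear, so it suffices to
treat a product `b 0 ⋯ b (m-1)` of such words. Concatenating them gives one word in the `𝒜 i`,
whose moment BMT independence computes through the kernel of its labels. Edges between groups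
point from the higher group to the lower one, so a letter of a lower group separates two equal
labels of a higher group, while a letter of a higher group never does. In the valley case
(M.2) this means that no kernel block meets two factors; in the peak case (M.1), no block meets
both the peak factor and the rest, and the peak factor does not cut the blocks of the rest.
Either way the kernel splits along the factors, and so does the moment.
-/

open Finset Function

lemma List.ofFn_update {M : Type*} {m : ℕ} (c : Fin m → M) (k : Fin m) (x : M) :
    List.ofFn (update c k x) = (List.ofFn c).set k x := by
  refine List.ext_getElem (by simp) fun i _ _ => ?_
  simp [List.getElem_set, update_apply, Fin.ext_iff, eq_comm]

lemma List.prod_ofFn_update_one {M : Type*} [Monoid M] {m : ℕ} (c : Fin m → M) (k : Fin m) :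
    (List.ofFn (update c k 1)).prod = ((List.ofFn c).eraseIdx k).prod := by
  rw [List.ofFn_update, List.prod_set, List.eraseIdx_eq_take_drop_succ, List.prod_append]
  split_ifs <;> simp

theorem MultilinearMap.eq_of_forall_mem_span {R ι N : Type*} {M : ι → Type*} [Semiring R]
    [∀ i, AddCommMonoid (M i)] [∀ i, Module R (M i)] [AddCommMonoid N] [Module R N]
    [Fintype ι] [DecidableEq ι] {f g : MultilinearMap R M N} {W : ∀ i, Set (M i)}
    (h : ∀ c, (∀ i, c i ∈ W i) → f c = g c) {c : ∀ i, M i}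
    (hc : ∀ i, c i ∈ Submodule.span R (W i)) : f c = g c := by
  suffices H : ∀ s : Finset ι, ∀ c : ∀ i, M i, (∀ i, c i ∈ Submodule.span R (W i)) →
      (∀ i ∉ s, c i ∈ W i) → f c = g c from H univ c hc (by simp)
  intro s
  induction s using Finset.induction_on with
  | empty => exact fun c _ hW => h c fun i => hW i (notMem_empty i)
  | insert i s hi ih =>
    intro c hc hW
    have heq : Set.EqOn (f.toLinearMap c i) (g.toLinearMap c i) (W i) := fun x hx => by
      refine ih _ (fun j => ?_) fun j hj => ?_
      · rcases eq_or_ne j i with rfl | hji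
        · simpa using Submodule.subset_span hx
        · simpa [hji] using hc j
      · rcases eq_or_ne j i with rfl | hji
        · simpa using hx
        · simpa [hji] using hW j (by simp [hji, hj])
    simpa using LinearMap.eqOn_span heq (hc i)

/-- The right-hand side of (M.1), with the omitted factor `c k` written as `1` so that
multilinearity is visible (see `List.prod_ofFn_update_one`). -/
def pullOutMultilinear {R A : Type*} [CommSemiring R] [Semiring A] [Algebra R A]
    (φ : A →ₗ[R] R) {m : ℕ} (k : Fin m) : MultilinearMap R (fun _ : Fin m => A) R :=
  MultilinearMap.mk' (fun c => φ (c k) * φ (List.ofFn (update c k 1)).prod)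
    (fun c i x y => by
      rcases eq_or_ne i k with rfl | hik
      · simp [add_mul]
      · have := (MultilinearMap.mkPiAlgebraFin R m A).map_update_add (update c k 1) i x y
        simp only [MultilinearMap.mkPiAlgebraFin_apply] at this
        simp only [update_of_ne hik.symm, update_comm hik, this, map_add, mul_add])
    (fun c i r x => by
      rcases eq_or_ne i k with rfl | hik
      · simp [mul_assoc]
      · have := (MultilinearMap.mkPiAlgebraFin R m A).map_update_smul (update c k 1) i r x
        simp only [MultilinearMap.mkPiAlgebraFin_apply] at this
        simp only [update_of_ne hik.symm, update_comm hik, this, map_smul, smul_eq_mul,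
          mul_left_comm])

def wordProducts {M : Type*} [Monoid M] (s : Set M) : Set M :=
  {x | ∃ l : List M, l ≠ [] ∧ (∀ y ∈ l, y ∈ s) ∧ l.prod = x}

lemma closure_subset_wordProducts {M : Type*} [Monoid M] (s : Set M) :
    (Subsemigroup.closure s : Set M) ⊆ wordProducts s := by
  intro x hx
  induction hx using Subsemigroup.closure_induction with
  | mem y hy => exact ⟨[y], by simp, by simpa using hy, by simp⟩
  | mul y z _ _ hy hz =>
    obtain ⟨l, hl, hls, rfl⟩ := hy
    obtain ⟨l', -, hls', rfl⟩ := hz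
    exact ⟨l ++ l', by simp [hl], fun y hy => (List.mem_append.1 hy).elim (hls y) (hls' y),
      List.prod_append⟩

lemma mem_span_wordProducts_of_mem_adjoin {R A : Type*} [CommSemiring R] [Semiring A]
    [Algebra R A] {s : Set A} {x : A} (hx : x ∈ NonUnitalAlgebra.adjoin R s) :
    x ∈ Submodule.span R (wordProducts s) := by
  have : x ∈ (NonUnitalAlgebra.adjoin R s).toSubmodule := hx
  rw [NonUnitalAlgebra.adjoin_eq_span] at this
  exact Submodule.span_mono (closure_subset_wordProducts s) this

section KernelPartition

variable {N : ℕ} {V : Type*} {E : V → V → Prop} {f : Fin N → V} {S T : Finset (Fin N)}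
  {k k' : Fin N}

lemma kerGRelOn_refl (E : V → V → Prop) (f : Fin N → V) (S : Finset (Fin N)) (k : Fin N) :
    kerGRelOn E f S k k :=
  ⟨rfl, fun _ _ h₁ h₂ => absurd (h₁.trans h₂) (by simp)⟩

lemma kerGRelOn.symm (h : kerGRelOn E f S k k') : kerGRelOn E f S k' k := by
  refine ⟨h.1.symm, fun l hl h₁ h₂ hne => ?_⟩
  rw [← h.1]
  exact h.2 l hl (min_comm k k' ▸ h₁) (max_comm k k' ▸ h₂) (h.1 ▸ hne)

lemma kerGRelOn.mono (hTS : T ⊆ S) (h : kerGRelOn E f S k k') : kerGRelOn E f T k k' :=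
  ⟨h.1, fun l hl => h.2 l (hTS hl)⟩

lemma kerGRelOn.of_forall_between (hT : ∀ l ∈ S, min k k' < l → l < max k k' → l ∈ T)
    (h : kerGRelOn E f T k k') : kerGRelOn E f S k k' :=
  ⟨h.1, fun l hl h₁ h₂ => h.2 l (hT l hl h₁ h₂) h₁ h₂⟩

lemma exists_mem_of_mem_kerGBlocks {B : Finset (Fin N)} (hB : B ∈ kerGBlocks E f S) :
    ∃ k ∈ B, B ⊆ S := by
  obtain ⟨k, hk, rfl⟩ := mem_image.1 hB
  exact ⟨k, mem_filter.2 ⟨hk, kerGRelOn_refl E f S k⟩, filter_subset _ _⟩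

theorem prod_kerGBlocks_eq_prod_fiberwise {β M : Type*} [Fintype β] [DecidableEq β] [CommMonoid M]
    (π : Fin N → β) (F : Finset (Fin N) → M)
    (hsep : ∀ k ∈ S, ∀ k' ∈ S, kerGRelOn E f S k k' → π k = π k')
    (hlift : ∀ k ∈ S, ∀ k' ∈ S, π k = π k' →
      kerGRelOn E f (S.filter (π · = π k)) k k' → kerGRelOn E f S k k') :
    ∏ B ∈ kerGBlocks E f S, F B = ∏ b, ∏ B ∈ kerGBlocks E f (S.filter (π · = b)), F B := by
  have hblock : ∀ k ∈ S, S.filter (kerGRelOn E f S k) =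
      (S.filter (π · = π k)).filter (kerGRelOn E f (S.filter (π · = π k)) k) := by
    intro k hk
    ext k'
    simp only [mem_filter]
    constructor
    · rintro ⟨hk', h⟩
      exact ⟨⟨hk', (hsep k hk k' hk' h).symm⟩, h.mono (filter_subset _ _)⟩
    · rintro ⟨⟨hk', hπ⟩, h⟩
      exact ⟨hk', hlift k hk k' hk' hπ.symm h⟩
  have hunion : kerGBlocks E f S = univ.biUnion fun b => kerGBlocks E f (S.filter (π · = b)) := by
    ext B
    simp only [kerGBlocks, mem_biUnion, mem_image, mem_univ, true_and, mem_filter]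
    constructor
    · rintro ⟨k, hk, rfl⟩
      exact ⟨π k, k, ⟨hk, rfl⟩, (hblock k hk).symm⟩
    · rintro ⟨b, k, ⟨hk, rfl⟩, rfl⟩
      exact ⟨k, hk, hblock k hk⟩
  rw [hunion, prod_biUnion]
  intro b _ b' _ hbb'
  refine disjoint_left.2 fun B hB hB' => hbb' ?_
  obtain ⟨k, hkB, hBS⟩ := exists_mem_of_mem_kerGBlocks hB
  obtain ⟨-, -, hBS'⟩ := exists_mem_of_mem_kerGBlocks hB'
  exact (mem_filter.1 (hBS hkB)).2.symm.trans (mem_filter.1 (hBS' hkB)).2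

end KernelPartition

section BlockProd

variable {M : Type*} [Monoid M] {N : ℕ}

lemma blockProd_univ (a : Fin N → M) : blockProd a univ = (List.ofFn a).prod := by
  rw [blockProd, Fin.sort_univ, List.ofFn_eq_map]

lemma blockProd_map {n : ℕ} (a : Fin N → M) (e : Fin n ↪o Fin N) (U : Finset (Fin n)) :
    blockProd a (U.map e.toEmbedding) = blockProd (a ∘ e) U := by
  rw [blockProd, blockProd, ← (e.strictMono.strictMonoOn _).map_finsetSort, List.map_map]
  rfl

lemma sort_eq_flatten_fiberwise {m : ℕ} {σ : Fin N → Fin m} (hσ : Monotone σ)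
    (T : Finset (Fin N)) :
    T.sort = (List.ofFn fun s => (T.filter (σ · = s)).sort).flatten := by
  refine T.sortedLT_sort.eq_of_mem_iff ?_ (by simp)
  rw [List.sortedLT_iff_pairwise, List.pairwise_flatten, List.pairwise_ofFn]
  refine ⟨by simpa using fun s => List.sortedLT_iff_pairwise.1 (sortedLT_sort _),
    fun s s' hss' t ht t' ht' => hσ.reflect_lt ?_⟩
  simp only [mem_sort, mem_filter] at ht ht'
  rwa [ht.2, ht'.2]

lemma blockProd_eq_prod_fiberwise {m : ℕ} {σ : Fin N → Fin m} (hσ : Monotone σ)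
    (a : Fin N → M) (T : Finset (Fin N)) :
    blockProd a T = (List.ofFn fun s => blockProd a (T.filter (σ · = s))).prod := by
  rw [blockProd, sort_eq_flatten_fiberwise hσ, List.map_flatten, List.prod_flatten,
    List.map_ofFn, List.map_ofFn]
  rfl

lemma blockProd_univ_eq_prod_ofFn {m : ℕ} {σ : Fin N → Fin m} (hσ : Monotone σ)
    {a : Fin N → M} {c : Fin m → M} (hprod : ∀ s, blockProd a (univ.filter (σ · = s)) = c s) :
    blockProd a univ = (List.ofFn c).prod := by
  simp only [blockProd_eq_prod_fiberwise hσ a univ, hprod]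

lemma blockProd_compl_eq_prod_ofFn_update {m : ℕ} {σ : Fin N → Fin m} (hσ : Monotone σ)
    {a : Fin N → M} {c : Fin m → M} (hprod : ∀ s, blockProd a (univ.filter (σ · = s)) = c s)
    (k : Fin m) :
    blockProd a (univ.filter (σ · ≠ k)) = (List.ofFn (update c k 1)).prod := by
  rw [blockProd_eq_prod_fiberwise hσ]
  congr 2
  funext s
  rcases eq_or_ne s k with rfl | hs
  · simp [filter_filter, blockProd]
  · rw [update_of_ne hs, ← hprod, filter_filter]
    congr 2
    ext t
    simp only [and_iff_right_iff_imp]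
    exact fun ht => ht ▸ hs

end BlockProd

section Subword

variable {N n : ℕ} {V : Type*} {E : V → V → Prop} {f : Fin N → V}

lemma kerGRelOn_map (e : Fin n ↪o Fin N) (U : Finset (Fin n)) (q q' : Fin n) :
    kerGRelOn E f (U.map e.toEmbedding) (e q) (e q') ↔ kerGRelOn E (f ∘ e) U q q' := by
  simp only [kerGRelOn, forall_mem_map, RelEmbedding.coe_toEmbedding, comp_apply,
    ← e.strictMono.monotone.map_min, ← e.strictMono.monotone.map_max, e.lt_iff_lt]

lemma kerGBlocks_map (e : Fin n ↪o Fin N) (U : Finset (Fin n)) :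
    kerGBlocks E f (U.map e.toEmbedding) =
      (kerGBlocks E (f ∘ e) U).image (Finset.map e.toEmbedding) := by
  simp only [kerGBlocks, map_eq_image, image_image]
  refine image_congr fun q _ => ?_
  simp only [comp_apply, ← map_eq_image, filter_map]
  congr 1
  exact filter_congr fun q' _ => kerGRelOn_map e U q q'

theorem BMTIndep.map_blockProd {𝒜 I : Type*} [Ring 𝒜] [Algebra ℂ 𝒜] {φ : 𝒜 →ₗ[ℂ] ℂ}
    {E : I → I → Prop} {A : I → NonUnitalSubalgebra ℂ 𝒜} (hindep : BMTIndep φ E A)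
    {a : Fin N → 𝒜} {ι : Fin N → I} (ha : ∀ t, a t ∈ A (ι t)) {S : Finset (Fin N)}
    (hS : S.Nonempty) :
    φ (blockProd a S) = ∏ B ∈ kerGBlocks E ι S, φ (blockProd a B) := by
  set e := S.orderEmbOfFin rfl
  have hSe : S = univ.map e.toEmbedding := (map_orderEmbOfFin_univ S rfl).symm
  rw [hSe, kerGBlocks_map, prod_image fun _ _ _ _ h => Finset.map_injective _ h, blockProd_map,
    blockProd_univ, hindep _ hS.card_pos (ι ∘ e) (a ∘ e) fun q => ha (e q)]
  simp only [blockProd_map]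

end Subword

lemma exists_flattening {M : Type*} [Monoid M] {m : ℕ} (w : Fin m → List M)
    (hw : ∀ k, w k ≠ []) :
    ∃ (N : ℕ) (σ : Fin N → Fin m) (a : Fin N → M), Monotone σ ∧ Surjective σ ∧
      (∀ t, a t ∈ w (σ t)) ∧ ∀ s, blockProd a (univ.filter (σ · = s)) = (w s).prod := by
  obtain ⟨N, ⟨e⟩⟩ : ∃ N, Nonempty (Fin N ≃o Σₗ k : Fin m, Fin (w k).length) :=
    ⟨_, ⟨Fintype.orderIsoFinOfCardEq _ rfl⟩⟩
  refine ⟨N, fun t => (ofLex (e t)).1, fun t => (w (ofLex (e t)).1).get (ofLex (e t)).2,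
    fun t t' h => ?_, fun s => ⟨e.symm (toLex ⟨s, ⟨0, List.length_pos_iff.2 (hw s)⟩⟩), ?_⟩,
    fun t => List.get_mem _ _, fun s => ?_⟩
  · rcases Sigma.Lex.le_def.1 (e.monotone h) with h | ⟨h, -⟩
    exacts [h.le, h.le]
  · simp
  let g : Fin (w s).length ↪o Fin N := OrderEmbedding.ofStrictMono
    (fun j => e.symm (toLex ⟨s, j⟩)) fun j j' h => e.symm.strictMono
      (Sigma.Lex.lt_def.2 (Or.inr ⟨rfl, h⟩))
  have hfiber : univ.filter (fun t => (ofLex (e t)).1 = s) = univ.map g.toEmbedding := by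
    ext t
    obtain ⟨⟨k, j⟩, rfl⟩ := e.symm.surjective.comp toLex.surjective t
    simp only [comp_apply, mem_filter, mem_univ, true_and, Finset.mem_map, e.apply_symm_apply,
      ofLex_toLex]
    constructor
    · rintro rfl
      exact ⟨j, rfl⟩
    · rintro ⟨j', hj'⟩
      have := congrArg (fun x => (ofLex (e x)).1) hj'
      change (ofLex (e (e.symm (toLex ⟨s, j'⟩)))).1 = (ofLex (e (e.symm (toLex ⟨k, j⟩)))).1
        at this
      simpa using this.symm
  have hletters : (fun t => (w (ofLex (e t)).1).get (ofLex (e t)).2) ∘ g = (w s).get := by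
    funext j
    change (w (ofLex (e (e.symm (toLex ⟨s, j⟩)))).1).get (ofLex (e (e.symm (toLex ⟨s, j⟩)))).2 = _
    rw [e.apply_symm_apply]
    rfl
  rw [hfiber, blockProd_map, blockProd_univ, hletters, List.ofFn_get]

lemma Monotone.exists_mem_Icc_of_surjective {α β : Type*} [LinearOrder α] [LinearOrder β]
    {σ : α → β} (hσ : Monotone σ) (hσs : Surjective σ) {p q : α} {r : β} (hpq : p ≤ q)
    (hp : σ p ≤ r) (hq : r ≤ σ q) : ∃ u, σ u = r ∧ p ≤ u ∧ u ≤ q := by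
  rcases hp.eq_or_lt with rfl | hp
  · exact ⟨p, rfl, le_rfl, hpq⟩
  rcases hq.eq_or_lt with rfl | hq
  · exact ⟨q, rfl, hpq, le_rfl⟩
  obtain ⟨u, rfl⟩ := hσs r
  exact ⟨u, rfl, (hσ.reflect_lt hp).le, (hσ.reflect_lt hq).le⟩

lemma Monotone.apply_eq_of_between {α β : Type*} [LinearOrder α] [LinearOrder β]
    {σ : α → β} (hσ : Monotone σ) {t t' l : α} (h : σ t = σ t') (h₁ : min t t' < l)
    (h₂ : l < max t t') : σ l = σ t := by
  apply le_antisymm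
  · simpa [hσ.map_max, ← h] using hσ h₂.le
  · simpa [hσ.map_min, ← h] using hσ h₁.le

section Valley

variable {J : Type*} [LinearOrder J] {m : ℕ} {f : Fin m → J}

lemma strictAntiOn_Iic_of_val_succ_lt {k : ℕ} (hk : k < m)
    (h : ∀ j (hj : j + 1 ≤ k),
      f ⟨j + 1, hj.trans_lt hk⟩ < f ⟨j, Nat.lt_of_succ_lt (hj.trans_lt hk)⟩) :
    StrictAntiOn f (Set.Iic ⟨k, hk⟩) := by
  rintro ⟨p, hp⟩ - ⟨q, hq⟩ hqk hpq
  simp only [Set.mem_Iic, Fin.mk_le_mk, Fin.mk_lt_mk] at hqk hpq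
  induction q, hpq using Nat.le_induction with
  | base => exact h p hqk
  | succ q hpq ih => exact (h q hqk).trans (ih (by omega) (by omega))

lemma strictMonoOn_Ici_of_lt_val_succ {k : ℕ} (hk : k < m)
    (h : ∀ j, k ≤ j → ∀ (hj : j + 1 < m), f ⟨j, Nat.lt_of_succ_lt hj⟩ < f ⟨j + 1, hj⟩) :
    StrictMonoOn f (Set.Ici ⟨k, hk⟩) := by
  rintro ⟨p, hp⟩ hkp ⟨q, hq⟩ - hpq
  simp only [Set.mem_Ici, Fin.mk_le_mk, Fin.mk_lt_mk] at hkp hpq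
  induction q, hpq using Nat.le_induction with
  | base => exact h p hkp hq
  | succ q hpq ih => exact (ih (by omega)).trans (h q (by omega) hq)

lemma exists_lt_between_of_valley (k : Fin m) (hanti : StrictAntiOn f (Set.Iic k))
    (hmono : StrictMonoOn f (Set.Ici k)) {s s' : Fin m} (hss' : s < s') (heq : f s = f s') :
    ∃ r, s < r ∧ r < s' ∧ f r < f s := by
  have hsk : s < k := not_le.1 fun hks => (hmono hks (hks.trans hss'.le) hss').ne heq
  have hks' : k < s' := not_le.1 fun hsk' => (hanti (hss'.le.trans hsk') hsk' hss').ne' heq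
  exact ⟨k, hsk, hks', hanti (Set.mem_Iic.2 hsk.le) Set.self_mem_Iic hsk⟩

end Valley

section FlatWord

/-! A flat word: its `t`-th letter `a t` lies in `A (ι t)` and comes from the factor `σ t`,
whose group is `idx (σ t)`. -/

variable {I J : Type*} [LinearOrder J] {E : I → I → Prop} {P : J → Set I}
  {N m : ℕ} {ι : Fin N → I} {σ : Fin N → Fin m} {idx : Fin m → J}

lemma idx_eq_of_label_eq (hdisj : ∀ j j', j ≠ j' → Disjoint (P j) (P j'))
    (hι : ∀ t, ι t ∈ P (idx (σ t))) {t t' : Fin N} (h : ι t = ι t') :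
    idx (σ t) = idx (σ t') := by
  by_contra hne
  exact Set.disjoint_left.1 (hdisj _ _ hne) (hι t) (h ▸ hι t')

/-- A letter of a lower group has no edge towards a higher one, so it cannot lie between two
letters joined by the kernel relation. -/
lemma idx_le_of_kerGRelOn (hdisj : ∀ j j', j ≠ j' → Disjoint (P j) (P j'))
    (hEdge : ∀ j j', j' < j → ∀ i ∈ P j, ∀ i' ∈ P j', E i i' ∧ ¬ E i' i)
    (hι : ∀ t, ι t ∈ P (idx (σ t))) (hσ : Monotone σ) (hσs : Surjective σ)
    {S : Finset (Fin N)} {t t' : Fin N} {r : Fin m} (h : kerGRelOn E ι S t t')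
    (h₁ : min (σ t) (σ t') ≤ r) (h₂ : r ≤ max (σ t) (σ t')) (hr : ∀ u, σ u = r → u ∈ S) :
    idx (σ t) ≤ idx r := by
  obtain ⟨u, rfl, hu₁, hu₂⟩ := hσ.exists_mem_Icc_of_surjective hσs (r := r)
    (min_le_max (a := t) (b := t')) (by rwa [hσ.map_min]) (by rwa [hσ.map_max])
  by_contra! hlt
  have hne : ι u ≠ ι t := fun heq => hlt.ne (idx_eq_of_label_eq hdisj hι heq)
  have hne' : u ≠ t ∧ u ≠ t' := ⟨fun hu => hne (hu ▸ rfl), fun hu => hne (hu ▸ h.1.symm)⟩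
  have hlo : min t t' < u := hu₁.lt_of_ne (by rcases min_choice t t' with h | h <;> grind)
  have hhi : u < max t t' := hu₂.lt_of_ne (by rcases max_choice t t' with h | h <;> grind)
  exact (hEdge _ _ hlt _ (hι t) _ (hι u)).2 (h.2 u (hr u rfl) hlo hhi hne)

variable {𝒜 : Type*} [Ring 𝒜] [Algebra ℂ 𝒜] {φ : 𝒜 →ₗ[ℂ] ℂ} {A : I → NonUnitalSubalgebra ℂ 𝒜}
  {a : Fin N → 𝒜}

theorem map_blockProd_univ_eq_prod_of_separated [NeZero m] (hindep : BMTIndep φ E A)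
    (hdisj : ∀ j j', j ≠ j' → Disjoint (P j) (P j'))
    (hEdge : ∀ j j', j' < j → ∀ i ∈ P j, ∀ i' ∈ P j', E i i' ∧ ¬ E i' i)
    (ha : ∀ t, a t ∈ A (ι t)) (hι : ∀ t, ι t ∈ P (idx (σ t)))
    (hσ : Monotone σ) (hσs : Surjective σ)
    (hsep : ∀ s s', s < s' → idx s = idx s' → ∃ r, s < r ∧ r < s' ∧ idx r < idx s) :
    φ (blockProd a univ) = ∏ s, φ (blockProd a (univ.filter (σ · = s))) := by
  have hfiber : ∀ s, (univ.filter (σ · = s)).Nonempty := fun s =>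
    let ⟨t, ht⟩ := hσs s; ⟨t, mem_filter.2 ⟨mem_univ t, ht⟩⟩
  have hsame : ∀ t t', kerGRelOn E ι univ t t' → σ t = σ t' := by
    intro t t' h
    by_contra hne
    wlog hlt : σ t < σ t' generalizing t t'
    · exact this t' t h.symm (Ne.symm hne) ((not_lt.1 hlt).lt_of_ne (Ne.symm hne))
    obtain ⟨r, h₁, h₂, hr⟩ := hsep _ _ hlt (idx_eq_of_label_eq hdisj hι h.1)
    exact hr.not_ge (idx_le_of_kerGRelOn hdisj hEdge hι hσ hσs h
      ((min_le_left _ _).trans h₁.le) (h₂.le.trans (le_max_right _ _)) fun _ _ => mem_univ _)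
  rw [hindep.map_blockProd ha ((hfiber 0).mono (subset_univ _)),
    prod_kerGBlocks_eq_prod_fiberwise σ _ (fun t _ t' _ => hsame t t') fun t _ t' _ h hrel =>
      hrel.of_forall_between fun l _ h₁ h₂ => by simpa using hσ.apply_eq_of_between h h₁ h₂]
  exact prod_congr rfl fun s _ => (hindep.map_blockProd ha (hfiber s)).symm
lemma eq_of_kerGRelOn_of_peak (hdisj : ∀ j j', j ≠ j' → Disjoint (P j) (P j'))
    (hEdge : ∀ j j', j' < j → ∀ i ∈ P j, ∀ i' ∈ P j', E i i' ∧ ¬ E i' i)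
    (hι : ∀ t, ι t ∈ P (idx (σ t))) (hσ : Monotone σ) (hσs : Surjective σ) {p k q : Fin m}
    (hpk : p.val + 1 = k.val) (hkq : k.val + 1 = q.val) (hp : idx p < idx k)
    (hq : idx q < idx k) {t t' : Fin N} (h : kerGRelOn E ι univ t t') (ht : σ t = k) :
    σ t' = k := by
  subst ht
  by_contra ht'
  rcases lt_or_gt_of_ne ht' with hlt | hgt
  · have hp' : σ t' ≤ p := Fin.le_def.2 (by grind [Fin.lt_def])
    exact hp.not_ge <| idx_le_of_kerGRelOn hdisj hEdge hι hσ hσs h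
      ((min_le_right _ _).trans hp') (le_max_of_le_left (Fin.le_def.2 (by omega)))
      fun _ _ => mem_univ _
  · have hq' : q ≤ σ t' := Fin.le_def.2 (by grind [Fin.lt_def])
    exact hq.not_ge <| idx_le_of_kerGRelOn hdisj hEdge hι hσ hσs h
      (min_le_of_left_le (Fin.le_def.2 (by omega))) (hq'.trans (le_max_right _ _))
      fun _ _ => mem_univ _

/-- A letter of the peak factor lying between two letters of the rest is of a higher group
than theirs (witness the factor `p` in between), so it has an edge towards them. -/
lemma kerGRelOn_univ_of_kerGRelOn_compl_peak (hdisj : ∀ j j', j ≠ j' → Disjoint (P j) (P j'))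
    (hEdge : ∀ j j', j' < j → ∀ i ∈ P j, ∀ i' ∈ P j', E i i' ∧ ¬ E i' i)
    (hι : ∀ t, ι t ∈ P (idx (σ t))) (hσ : Monotone σ) (hσs : Surjective σ) {p k : Fin m}
    (hpk : p.val + 1 = k.val) (hp : idx p < idx k) {t t' : Fin N} (ht : σ t ≠ k)
    (ht' : σ t' ≠ k) (h : kerGRelOn E ι (univ.filter (σ · ≠ k)) t t') :
    kerGRelOn E ι univ t t' := by
  refine ⟨h.1, fun l _ h₁ h₂ hne => ?_⟩
  by_cases hl : σ l = k
  · have hlo : min (σ t) (σ t') < k := by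
      refine (hl ▸ hσ.map_min ▸ hσ h₁.le).lt_of_ne ?_
      rcases min_choice (σ t) (σ t') with h | h <;> rwa [h]
    have hhi : k < max (σ t) (σ t') := by
      refine (hl ▸ hσ.map_max ▸ hσ h₂.le).lt_of_ne' ?_
      rcases max_choice (σ t) (σ t') with h | h <;> rwa [h]
    have hpk' : p < k := Fin.lt_def.2 (by omega)
    have := idx_le_of_kerGRelOn hdisj hEdge hι hσ hσs h
      (Fin.le_def.2 (by grind [Fin.lt_def])) (hpk'.le.trans hhi.le)
      fun u hu => mem_filter.2 ⟨mem_univ _, hu ▸ hpk'.ne⟩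
    exact (hEdge _ _ (by rw [hl]; exact this.trans_lt hp) _ (hι l) _ (hι t)).1
  · exact h.2 l (mem_filter.2 ⟨mem_univ _, hl⟩) h₁ h₂ hne

theorem map_blockProd_univ_eq_mul_of_peak (hindep : BMTIndep φ E A)
    (hdisj : ∀ j j', j ≠ j' → Disjoint (P j) (P j'))
    (hEdge : ∀ j j', j' < j → ∀ i ∈ P j, ∀ i' ∈ P j', E i i' ∧ ¬ E i' i)
    (ha : ∀ t, a t ∈ A (ι t)) (hι : ∀ t, ι t ∈ P (idx (σ t)))
    (hσ : Monotone σ) (hσs : Surjective σ) {p k q : Fin m} (hpk : p.val + 1 = k.val)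
    (hkq : k.val + 1 = q.val) (hp : idx p < idx k) (hq : idx q < idx k) :
    φ (blockProd a univ) =
      φ (blockProd a (univ.filter (σ · = k))) * φ (blockProd a (univ.filter (σ · ≠ k))) := by
  have hpeak : (univ.filter (σ · = k)).Nonempty :=
    let ⟨t, ht⟩ := hσs k; ⟨t, mem_filter.2 ⟨mem_univ t, ht⟩⟩
  have hcompl : (univ.filter (σ · ≠ k)).Nonempty :=
    let ⟨t, ht⟩ := hσs p; ⟨t, mem_filter.2 ⟨mem_univ t, ht ▸ Fin.ne_of_val_ne (by omega)⟩⟩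
  rw [hindep.map_blockProd ha (hpeak.mono (subset_univ _)),
    prod_kerGBlocks_eq_prod_fiberwise (fun t => decide (σ t = k)) _ ?_ ?_, Fintype.prod_bool]
  · simp only [decide_eq_true_eq, decide_eq_false_iff_not]
    rw [hindep.map_blockProd ha hpeak, hindep.map_blockProd ha hcompl]
  · intro t _ t' _ h
    simp only [decide_eq_decide]
    exact ⟨eq_of_kerGRelOn_of_peak hdisj hEdge hι hσ hσs hpk hkq hp hq h,
      eq_of_kerGRelOn_of_peak hdisj hEdge hι hσ hσs hpk hkq hp hq h.symm⟩
  · intro t _ t' _ hπ h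
    by_cases ht : σ t = k
    · simp only [ht, decide_true, decide_eq_true_eq] at h hπ
      exact h.of_forall_between fun l _ h₁ h₂ => by
        simpa [ht] using hσ.apply_eq_of_between (ht.trans (of_decide_eq_true hπ.symm).symm) h₁ h₂
    · simp only [ht, decide_false, decide_eq_false_iff_not] at h hπ
      exact kerGRelOn_univ_of_kerGRelOn_compl_peak hdisj hEdge hι hσ hσs hpk hp ht
        (of_decide_eq_false hπ.symm) h

end FlatWord

section Words

variable {𝒜 I J : Type*} [Ring 𝒜] [Algebra ℂ 𝒜] {φ : 𝒜 →ₗ[ℂ] ℂ}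
  {E : I → I → Prop} {A : I → NonUnitalSubalgebra ℂ 𝒜} {P : J → Set I} {m : ℕ}
  {idx : Fin m → J} {c : Fin m → 𝒜}

lemma exists_flat_word (hc : ∀ k, c k ∈ wordProducts (⋃ i ∈ P (idx k), (A i : Set 𝒜))) :
    ∃ (N : ℕ) (σ : Fin N → Fin m) (a : Fin N → 𝒜) (ι : Fin N → I), Monotone σ ∧
      Surjective σ ∧ (∀ t, a t ∈ A (ι t)) ∧ (∀ t, ι t ∈ P (idx (σ t))) ∧
      ∀ s, blockProd a (univ.filter (σ · = s)) = c s := by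
  choose w hw hwA hwc using hc
  obtain ⟨N, σ, a, hσ, hσs, ha, hprod⟩ := exists_flattening w hw
  have hlabel : ∀ t, ∃ i ∈ P (idx (σ t)), a t ∈ A i := fun t => by
    simpa using hwA _ _ (ha t)
  choose ι hιP hιA using hlabel
  exact ⟨N, σ, a, ι, hσ, hσs, hιA, hιP, fun s => (hprod s).trans (hwc s)⟩

variable [LinearOrder J]

theorem map_prod_ofFn_eq_prod_of_separated [NeZero m] (hindep : BMTIndep φ E A)
    (hdisj : ∀ j j', j ≠ j' → Disjoint (P j) (P j'))
    (hEdge : ∀ j j', j' < j → ∀ i ∈ P j, ∀ i' ∈ P j', E i i' ∧ ¬ E i' i)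
    (hsep : ∀ s s', s < s' → idx s = idx s' → ∃ r, s < r ∧ r < s' ∧ idx r < idx s)
    (hc : ∀ k, c k ∈ wordProducts (⋃ i ∈ P (idx k), (A i : Set 𝒜))) :
    φ (List.ofFn c).prod = ∏ k, φ (c k) := by
  obtain ⟨N, σ, a, ι, hσ, hσs, ha, hι, hprod⟩ := exists_flat_word hc
  rw [← blockProd_univ_eq_prod_ofFn hσ hprod,
    map_blockProd_univ_eq_prod_of_separated hindep hdisj hEdge ha hι hσ hσs hsep]
  simp only [hprod]

theorem map_prod_ofFn_eq_mul_of_peak (hindep : BMTIndep φ E A)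
    (hdisj : ∀ j j', j ≠ j' → Disjoint (P j) (P j'))
    (hEdge : ∀ j j', j' < j → ∀ i ∈ P j, ∀ i' ∈ P j', E i i' ∧ ¬ E i' i)
    {p k q : Fin m} (hpk : p.val + 1 = k.val) (hkq : k.val + 1 = q.val)
    (hp : idx p < idx k) (hq : idx q < idx k)
    (hc : ∀ k, c k ∈ wordProducts (⋃ i ∈ P (idx k), (A i : Set 𝒜))) :
    φ (List.ofFn c).prod = φ (c k) * φ (List.ofFn (update c k 1)).prod := by
  obtain ⟨N, σ, a, ι, hσ, hσs, ha, hι, hprod⟩ := exists_flat_word hc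
  rw [← blockProd_univ_eq_prod_ofFn hσ hprod, ← blockProd_compl_eq_prod_ofFn_update hσ hprod,
    map_blockProd_univ_eq_mul_of_peak hindep hdisj hEdge ha hι hσ hσs hpk hkq hp hq, hprod]

end Words

/-- consistency, monotone case. If `J` is totally ordered and edges between
distinct groups go exactly from the larger group to the smaller one, the generated
subalgebras are monotone independent. -/
theorem stmt10 {𝒜 : Type*} [Ring 𝒜] [Algebra ℂ 𝒜] (φ : 𝒜 →ₗ[ℂ] ℂ)
    {I J : Type*} [LinearOrder J] (E : I → I → Prop)
    (A : I → NonUnitalSubalgebra ℂ 𝒜) (hindep : BMTIndep φ E A)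
    (P : J → Set I)
    (hdisj : ∀ j j', j ≠ j' → Disjoint (P j) (P j'))
    (B : J → NonUnitalSubalgebra ℂ 𝒜)
    (hB : ∀ j, B j = NonUnitalAlgebra.adjoin ℂ (⋃ i ∈ P j, (A i : Set 𝒜)))
    (hEdge : ∀ j j', j' < j → ∀ i ∈ P j, ∀ i' ∈ P j', E i i' ∧ ¬ E i' i) :
    ∀ (m : ℕ), 1 ≤ m → ∀ (idx : Fin m → J) (b : Fin m → 𝒜),
      (∀ k, b k ∈ B (idx k)) →
      (∀ (k : ℕ) (h : k + 1 < m), idx ⟨k, by omega⟩ ≠ idx ⟨k + 1, h⟩) →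
      ((∀ (k : ℕ) (h1 : 1 ≤ k) (h2 : k + 1 < m),
          idx ⟨k - 1, by omega⟩ < idx ⟨k, by omega⟩ →
          idx ⟨k + 1, h2⟩ < idx ⟨k, by omega⟩ →
          φ (List.ofFn b).prod
            = φ (b ⟨k, by omega⟩) * φ ((List.ofFn b).eraseIdx k).prod)
        ∧
        (∀ (k : ℕ) (hk : k < m),
          (∀ (j : ℕ) (hj : j + 1 ≤ k), idx ⟨j + 1, by omega⟩ < idx ⟨j, by omega⟩) →
          (∀ (j : ℕ) (hj : k ≤ j) (hj2 : j + 1 < m), idx ⟨j, by omega⟩ < idx ⟨j + 1, hj2⟩) →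
          φ (List.ofFn b).prod = ∏ k : Fin m, φ (b k))) := by
  intro m hm idx b hb _
  have hspan : ∀ k, b k ∈ Submodule.span ℂ (wordProducts (⋃ i ∈ P (idx k), (A i : Set 𝒜))) :=
    fun k => mem_span_wordProducts_of_mem_adjoin (hB (idx k) ▸ hb k)
  refine ⟨fun k hk₁ hk₂ hp hq => ?_, fun k hk hdec hinc => ?_⟩
  · have := MultilinearMap.eq_of_forall_mem_span
      (f := φ.compMultilinearMap (MultilinearMap.mkPiAlgebraFin ℂ m 𝒜))
      (g := pullOutMultilinear φ ⟨k, by omega⟩) (fun c hc => by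
        simpa [pullOutMultilinear] using map_prod_ofFn_eq_mul_of_peak hindep hdisj hEdge
          (p := ⟨k - 1, by omega⟩) (q := ⟨k + 1, hk₂⟩) (Nat.sub_add_cancel hk₁) rfl hp hq hc)
        hspan
    simpa [pullOutMultilinear, List.prod_ofFn_update_one] using this
  · have : NeZero m := ⟨by omega⟩
    have hsep : ∀ s s', s < s' → idx s = idx s' → ∃ r, s < r ∧ r < s' ∧ idx r < idx s :=
      fun _ _ => exists_lt_between_of_valley ⟨k, hk⟩ (strictAntiOn_Iic_of_val_succ_lt hk hdec)
        (strictMonoOn_Ici_of_lt_val_succ hk hinc)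
    have := MultilinearMap.eq_of_forall_mem_span
      (f := φ.compMultilinearMap (MultilinearMap.mkPiAlgebraFin ℂ m 𝒜))
      (g := (MultilinearMap.mkPiAlgebra ℂ (Fin m) ℂ).compLinearMap fun _ => φ) (fun c hc => by
        simpa using map_prod_ofFn_eq_prod_of_separated hindep hdisj hEdge hsep hc) hspan
    simpa using this

end
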